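/- arXiv:2509.16450 — 2 statements merged into one kernel-verified Lean document; each statement's English description precedes it below -/
import Mathlib

section
/- In the instance D(G,≻,ε): if x is a symmetric data exchange in which every vertex agent has nonnegative utility (as holds in any core-stable exchange), then for every vertex v one has Σ_{e∈E(v)} f⁺(e) ≤ 1 + ε. -/
open scoped BigOperators
open Classical

namespace DataExchangeHGM

noncomputable section

/-- A data exchange on an arbitrary agent type: entries in `[0,1]`, zero diagonal. -/
def IsExch {A : Type*} (x : A → A → ℝ) : Prop :=
  (∀ a b, 0 ≤ x a b ∧ x a b ≤ 1) ∧ ∀ a, x a a = 0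

/-- An exchange over the coalition `U`: zero outside `U × U`. -/
def IsExchOver {A : Type*} (U : Set A) (x : A → A → ℝ) : Prop :=
  IsExch x ∧ ∀ a b, (a ∉ U ∨ b ∉ U) → x a b = 0

/-- Core stability with respect to a utility function `u` (taking the whole exchange). -/
def CoreStable {A : Type*} (u : (A → A → ℝ) → A → ℝ) (x : A → A → ℝ) : Prop :=
  ¬ ∃ (U : Set A) (y : A → A → ℝ), U.Nonempty ∧ IsExchOver U y ∧ ∀ a ∈ U, u x a < u y a

variable {V E : Type*}

/-- The agents of the instance `D(G,≻,ε)`: one edge agent and one intermediate agent per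
hyperedge, and one vertex agent per vertex. -/
abbrev Agent (V E : Type*) := E ⊕ (E ⊕ V)

/-- The edge agent of hyperedge `e`. -/
def edgeA (e : E) : Agent V E := Sum.inl e

/-- The intermediate agent `i_e` of hyperedge `e`. -/
def interA (e : E) : Agent V E := Sum.inr (Sum.inl e)

/-- The vertex agent of vertex `v`. -/
def vertA (v : V) : Agent V E := Sum.inr (Sum.inr v)

variable [Fintype E]

/-- `E(v)`: the hyperedges containing `v`, where `ends e : Fin 3 → V` lists the three
vertices of `e`. -/
def Ev (ends : E → Fin 3 → V) (v : V) : Finset E :=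
  Finset.univ.filter (fun e => ∃ t, ends e t = v)

/-- The weight `w_v(e)`: `d+H+1`, `d+H`, or `H` according to the rank (0 = most preferred,
1 = second, 2 = least) of `e` in `v`'s preference order. -/
def weight (d H : ℝ) (rank : V → E → Fin 3) (v : V) (e : E) : ℝ :=
  if rank v e = 0 then d + H + 1 else if rank v e = 1 then d + H else H

/-- Utility of the edge agent `e`: payoff `x_{i_e,e}` minus cost `(1-ε)·x_{e,i_e}`. -/
def uEdge (ε : ℝ) (x : Agent V E → Agent V E → ℝ) (e : E) : ℝ :=
  x (interA e) (edgeA e) - (1 - ε) * x (edgeA e) (interA e)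

/-- Utility of the intermediate agent `i_e`. -/
def uInter (ε : ℝ) (ends : E → Fin 3 → V) (x : Agent V E → Agent V E → ℝ) (e : E) : ℝ :=
  min (x (edgeA e) (interA e))
      (min (x (vertA (ends e 0)) (interA e))
        (min (x (vertA (ends e 1)) (interA e)) (x (vertA (ends e 2)) (interA e))))
    - (1 - ε) *
      max (x (interA e) (edgeA e))
        (max (x (interA e) (vertA (ends e 0)))
          (max (x (interA e) (vertA (ends e 1))) (x (interA e) (vertA (ends e 2)))))

/-- Utility of the vertex agent `v`. -/
def uVert (d H Γ : ℝ) (ends : E → Fin 3 → V) (rank : V → E → Fin 3)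
    (x : Agent V E → Agent V E → ℝ) (v : V) : ℝ :=
  (∑ e ∈ Ev ends v, weight d H rank v e * x (interA e) (vertA v))
    - Γ * max ((∑ e ∈ Ev ends v, x (vertA v) (interA e)) - 1) 0

/-- The utility function of the instance `D(G,≻,ε)`. -/
def util (ε d H Γ : ℝ) (ends : E → Fin 3 → V) (rank : V → E → Fin 3)
    (x : Agent V E → Agent V E → ℝ) : Agent V E → ℝ
  | Sum.inl e => uEdge ε x e
  | Sum.inr (Sum.inl e) => uInter ε ends x e
  | Sum.inr (Sum.inr v) => uVert d H Γ ends rank x v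

/-- A symmetric exchange: for every hyperedge `e`, all shares from `i_e` to the edge agent
and the three vertex agents agree (their common value is `f⁻(e)`), and all shares towards
`i_e` agree (their common value is `f⁺(e)`). -/
def Symm (ends : E → Fin 3 → V) (x : Agent V E → Agent V E → ℝ) : Prop :=
  ∀ e : E, (∀ t : Fin 3, x (interA e) (vertA (ends e t)) = x (interA e) (edgeA e)) ∧
    (∀ t : Fin 3, x (vertA (ends e t)) (interA e) = x (edgeA e) (interA e))

/-- `f⁻(e)`: the common outgoing share of `i_e` in a symmetric exchange. -/
def fminus (x : Agent V E → Agent V E → ℝ) (e : E) : ℝ := x (interA e) (edgeA e)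

/-- `f⁺(e)`: the common incoming share of `i_e` in a symmetric exchange. -/
def fplus (x : Agent V E → Agent V E → ℝ) (e : E) : ℝ := x (edgeA e) (interA e)

section VertexAgent

variable {d H : ℝ} {ends : E → Fin 3 → V} {rank : V → E → Fin 3}
  {x : Agent V E → Agent V E → ℝ}

omit [Fintype E] in
theorem weight_nonneg (hd : 0 ≤ d) (hH : 0 ≤ H) (v : V) (e : E) : 0 ≤ weight d H rank v e := by
  unfold weight; split_ifs <;> linarith

omit [Fintype E] in
theorem weight_le (hd : 0 ≤ d) (v : V) (e : E) : weight d H rank v e ≤ d + H + 1 := by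
  unfold weight; split_ifs <;> linarith

theorem sum_weight_mul_le (hd : 0 ≤ d) (hH : 0 ≤ H) (hx : IsExch x) (v : V) :
    ∑ e ∈ Ev ends v, weight d H rank v e * x (interA e) (vertA v)
      ≤ (Ev ends v).card * (d + H + 1) := by
  rw [← nsmul_eq_mul, ← Finset.sum_const]
  refine Finset.sum_le_sum fun e _ => ?_
  obtain ⟨-, hx1⟩ := hx.1 (interA e) (vertA v)
  calc weight d H rank v e * x (interA e) (vertA v)
      ≤ weight d H rank v e := mul_le_of_le_one_right (weight_nonneg hd hH v e) hx1
    _ ≤ d + H + 1 := weight_le hd v e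

theorem sum_fplus_eq_of_symm (hsymm : Symm ends x) (v : V) :
    ∑ e ∈ Ev ends v, fplus x e = ∑ e ∈ Ev ends v, x (vertA v) (interA e) := by
  refine Finset.sum_congr rfl fun e he => ?_
  obtain ⟨t, rfl⟩ := (Finset.mem_filter.mp he).2
  exact ((hsymm e).2 t).symm

end VertexAgent

theorem le_one_add_of_sub_penalty_nonneg {Γ ε P S : ℝ} (hΓ : 0 < Γ) (hP : P ≤ Γ * ε)
    (hu : 0 ≤ P - Γ * max (S - 1) 0) : S ≤ 1 + ε := by
  have : Γ * (S - 1) ≤ Γ * ε :=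
    calc Γ * (S - 1) ≤ Γ * max (S - 1) 0 := mul_le_mul_of_nonneg_left (le_max_left _ _) hΓ.le
      _ ≤ Γ * ε := by linarith
  linarith [le_of_mul_le_mul_left this hΓ]

theorem sum_fplus_le_general
    (V E : Type*) [Fintype E]
    (ends : E → Fin 3 → V)
    (hdeg : ∀ v, (Ev ends v).card ≤ 3)
    (rank : V → E → Fin 3)
    (ε d H Γ : ℝ) (hε0 : 0 < ε)
    (hd : d = ε ^ (-(1:ℝ)/4)) (hH : H = ε ^ (-(1:ℝ)/2)) (hΓ : Γ = 3*(d+H+1)/ε)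
    (x : Agent V E → Agent V E → ℝ) (hx : IsExch x) (hsymm : Symm ends x)
    (huv : ∀ v : V, 0 ≤ uVert d H Γ ends rank x v) :
    ∀ v : V, (∑ e ∈ Ev ends v, fplus x e) ≤ 1 + ε := by
  intro v
  have hd0 : 0 ≤ d := hd ▸ (Real.rpow_pos_of_pos hε0 _).le
  have hH0 : 0 ≤ H := hH ▸ (Real.rpow_pos_of_pos hε0 _).le
  have hΓ0 : 0 < Γ := by rw [hΓ]; positivity
  -- `Γ` is chosen so that `Γ · ε` bounds the largest possible payoff of a vertex agent
  have hpay : ∑ e ∈ Ev ends v, weight d H rank v e * x (interA e) (vertA v) ≤ Γ * ε :=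
    calc _ ≤ (Ev ends v).card * (d + H + 1) := sum_weight_mul_le hd0 hH0 hx v
      _ ≤ 3 * (d + H + 1) := by gcongr; exact_mod_cast hdeg v
      _ = Γ * ε := by rw [hΓ]; field_simp
  rw [sum_fplus_eq_of_symm hsymm v]
  exact le_one_add_of_sub_penalty_nonneg hΓ0 hpay (huv v)

/-- In `D(G,≻,ε)`, if `x` is a symmetric data exchange in which every
vertex agent has nonnegative utility, then `Σ_{e ∈ E(v)} f⁺(e) ≤ 1 + ε` for every vertex. -/
theorem sum_fplus_le
    (V E : Type*) [Fintype V] [Fintype E]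
    (ends : E → Fin 3 → V) (hends : ∀ e, Function.Injective (ends e))
    (hdeg : ∀ v, (Ev ends v).card ≤ 3)
    (rank : V → E → Fin 3)
    (hrank_inj : ∀ v, ∀ e ∈ Ev ends v, ∀ e' ∈ Ev ends v, rank v e = rank v e' → e = e')
    (hrank_seg : ∀ v, ∀ e ∈ Ev ends v, (rank v e : ℕ) < (Ev ends v).card)
    (ε d H Γ : ℝ) (hε0 : 0 < ε) (hε1 : ε < 1/1000)
    (hd : d = ε ^ (-(1:ℝ)/4)) (hH : H = ε ^ (-(1:ℝ)/2)) (hΓ : Γ = 3*(d+H+1)/ε)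
    (x : Agent V E → Agent V E → ℝ) (hx : IsExch x) (hsymm : Symm ends x)
    (huv : ∀ v : V, 0 ≤ uVert d H Γ ends rank x v) :
    ∀ v : V, (∑ e ∈ Ev ends v, fplus x e) ≤ 1 + ε :=
  sum_fplus_le_general V E ends hdeg rank ε d H Γ hε0 hd hH hΓ x hx hsymm huv

end
end DataExchangeHGM
end

section
/- In the instance D(G,≻,ε): let x be a symmetric data exchange, let e = {v¹,v²,v³} be a hyperedge with Δ := 1 − max(f⁺(e), f⁻(e)) > 0, let U consist of the edge agent e, the intermediate agent i_e, and the three vertex agents of e, and let x^U be the exchange over U which equals x_{s,t} + Δ on each of the coordinates (e,i_e), (i_e,e), (vᵗ,i_e), (i_e,vᵗ) for t ∈ {1,2,3} and equals 0 on all other coordinates. Then u_e(x^U) > u_e(x) and u_{i_e}(x^U) > u_{i_e}(x); in fact both utilities increase by exactly ε·Δ. -/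
/-!
On the coalition of `e`, every share into `i_e` is `f⁺(e)` and every share out of `i_e` is
`f⁻(e)`, both before and after the deviation, so the min and max in `i_e`'s utility collapse.
Then both `e` and `i_e` have utility of the form `a - (1 - ε) b` with `a` and `b` each raised
by `Δ`, which gains exactly `ε Δ`.
-/

open scoped BigOperators
open Classical

namespace DataExchangeHGM

variable {V E : Type*}

/-- `Symm ends x` is `∀ e, SymmAt ends x e`. -/
def SymmAt (ends : E → Fin 3 → V) (x : Agent V E → Agent V E → ℝ) (e : E) : Prop :=
  (∀ t : Fin 3, x (interA e) (vertA (ends e t)) = fminus x e) ∧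
    (∀ t : Fin 3, x (vertA (ends e t)) (interA e) = fplus x e)

/-- The exchange `x^U` over the coalition `U = {e, i_e, v¹, v², v³}`. -/
noncomputable def deviation (ends : E → Fin 3 → V) (x : Agent V E → Agent V E → ℝ) (e : E)
    (Δ : ℝ) : Agent V E → Agent V E → ℝ := fun a b =>
  if (a = edgeA e ∧ b = interA e) ∨ (a = interA e ∧ b = edgeA e) ∨
      (∃ t : Fin 3, a = vertA (ends e t) ∧ b = interA e) ∨
      (∃ t : Fin 3, a = interA e ∧ b = vertA (ends e t))
    then x a b + Δ else 0

theorem uEdge_eq_fminus_sub (ε : ℝ) (x : Agent V E → Agent V E → ℝ) (e : E) :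
    uEdge ε x e = fminus x e - (1 - ε) * fplus x e :=
  rfl

theorem SymmAt.uInter_eq {ends : E → Fin 3 → V} {x : Agent V E → Agent V E → ℝ} {e : E}
    (h : SymmAt ends x e) (ε : ℝ) :
    uInter ε ends x e = fplus x e - (1 - ε) * fminus x e := by
  simp only [uInter, h.1, h.2, fplus, fminus, min_self, max_self]

section deviation

variable {ends : E → Fin 3 → V} {x : Agent V E → Agent V E → ℝ} {e : E} {Δ : ℝ}

theorem fplus_deviation : fplus (deviation ends x e Δ) e = fplus x e + Δ :=
  if_pos (Or.inl ⟨rfl, rfl⟩)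

theorem fminus_deviation : fminus (deviation ends x e Δ) e = fminus x e + Δ :=
  if_pos (Or.inr (Or.inl ⟨rfl, rfl⟩))

theorem deviation_vertA_interA (t : Fin 3) :
    deviation ends x e Δ (vertA (ends e t)) (interA e) = x (vertA (ends e t)) (interA e) + Δ :=
  if_pos (Or.inr (Or.inr (Or.inl ⟨t, rfl, rfl⟩)))

theorem deviation_interA_vertA (t : Fin 3) :
    deviation ends x e Δ (interA e) (vertA (ends e t)) = x (interA e) (vertA (ends e t)) + Δ :=
  if_pos (Or.inr (Or.inr (Or.inr ⟨t, rfl, rfl⟩)))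

theorem SymmAt.deviation (h : SymmAt ends x e) : SymmAt ends (deviation ends x e Δ) e :=
  ⟨fun t => by rw [deviation_interA_vertA, fminus_deviation, h.1],
    fun t => by rw [deviation_vertA_interA, fplus_deviation, h.2]⟩

theorem uEdge_deviation (ε : ℝ) :
    uEdge ε (deviation ends x e Δ) e = uEdge ε x e + ε * Δ := by
  rw [uEdge_eq_fminus_sub, uEdge_eq_fminus_sub, fplus_deviation, fminus_deviation]
  ring

theorem uInter_deviation_of_symmAt (h : SymmAt ends x e) (ε : ℝ) :
    uInter ε ends (deviation ends x e Δ) e = uInter ε ends x e + ε * Δ := by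
  rw [h.deviation.uInter_eq, h.uInter_eq, fplus_deviation, fminus_deviation]
  ring

end deviation

theorem deviation_improves_edge_and_inter_general
    (V E : Type*)
    (ends : E → Fin 3 → V)
    (ε : ℝ) (hε0 : 0 < ε)
    (x : Agent V E → Agent V E → ℝ) (hsymm : Symm ends x)
    (e : E) (Δ : ℝ) (hΔpos : 0 < Δ)
    (y : Agent V E → Agent V E → ℝ)
    (hy : ∀ a b : Agent V E, y a b =
      if (a = edgeA e ∧ b = interA e) ∨ (a = interA e ∧ b = edgeA e) ∨
          (∃ t : Fin 3, a = vertA (ends e t) ∧ b = interA e) ∨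
          (∃ t : Fin 3, a = interA e ∧ b = vertA (ends e t))
        then x a b + Δ else 0) :
    uEdge ε y e = uEdge ε x e + ε * Δ ∧
    uInter ε ends y e = uInter ε ends x e + ε * Δ ∧
    uEdge ε x e < uEdge ε y e ∧
    uInter ε ends x e < uInter ε ends y e := by
  obtain rfl : y = deviation ends x e Δ := funext₂ hy
  have hEdge : uEdge ε (deviation ends x e Δ) e = uEdge ε x e + ε * Δ := uEdge_deviation ε
  have hInter : uInter ε ends (deviation ends x e Δ) e = uInter ε ends x e + ε * Δ :=
    uInter_deviation_of_symmAt (hsymm e) ε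
  have hgain : 0 < ε * Δ := mul_pos hε0 hΔpos
  exact ⟨hEdge, hInter, by linarith, by linarith⟩

/-- In `D(G,≻,ε)`, let `x` be a symmetric data exchange, let `e` be a
hyperedge with `Δ = 1 - max(f⁺(e), f⁻(e)) > 0`, and let `y` be the exchange over the
coalition `{e, i_e, v¹, v², v³}` that adds `Δ` to each pairwise share between `i_e` and the
other coalition members and is zero elsewhere. Then the edge agent `e` and the intermediate
agent `i_e` are strictly better off in `y`; in fact both utilities increase by exactly `ε·Δ`. -/
theorem deviation_improves_edge_and_inter
    (V E : Type*) [Fintype V] [Fintype E]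
    (ends : E → Fin 3 → V) (hends : ∀ e, Function.Injective (ends e))
    (hdeg : ∀ v, (Ev ends v).card ≤ 3)
    (rank : V → E → Fin 3)
    (hrank_inj : ∀ v, ∀ e ∈ Ev ends v, ∀ e' ∈ Ev ends v, rank v e = rank v e' → e = e')
    (hrank_seg : ∀ v, ∀ e ∈ Ev ends v, (rank v e : ℕ) < (Ev ends v).card)
    (ε : ℝ) (hε0 : 0 < ε) (hε1 : ε < 1/1000)
    (x : Agent V E → Agent V E → ℝ) (hx : IsExch x) (hsymm : Symm ends x)
    (e : E) (Δ : ℝ) (hΔdef : Δ = 1 - max (fplus x e) (fminus x e)) (hΔpos : 0 < Δ)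
    (y : Agent V E → Agent V E → ℝ)
    (hy : ∀ a b : Agent V E, y a b =
      if (a = edgeA e ∧ b = interA e) ∨ (a = interA e ∧ b = edgeA e) ∨
          (∃ t : Fin 3, a = vertA (ends e t) ∧ b = interA e) ∨
          (∃ t : Fin 3, a = interA e ∧ b = vertA (ends e t))
        then x a b + Δ else 0) :
    uEdge ε y e = uEdge ε x e + ε * Δ ∧
    uInter ε ends y e = uInter ε ends x e + ε * Δ ∧
    uEdge ε x e < uEdge ε y e ∧
    uInter ε ends x e < uInter ε ends y e :=
  deviation_improves_edge_and_inter_general V E ends ε hε0 x hsymm e Δ hΔpos y hy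

end DataExchangeHGM
end
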